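/- Let A be an invertible N×N matrix over ℂ, b ∈ ℂ^N, and let g be the degree of the minimal polynomial of b with respect to A. Then the minimum over z ∈ K_g(A, b) of the Euclidean norm ‖b − Az‖₂ equals 0; i.e., there exists z ∈ K_g(A, b) with Az = b. In particular, the GMRES method, which at iteration n returns the minimizer of ‖b − Az‖₂ over z ∈ K_n(A, b), produces the exact solution in at most g iterations. -/

import Mathlib

open Matrix Polynomial

/-- The n-th Krylov subspace K_n(A, b) = span{b, Ab, A²b, …, A^{n−1}b}. -/
noncomputable def krylov {N : ℕ} (A : Matrix (Fin N) (Fin N) ℂ) (b : Fin N → ℂ) (n : ℕ) :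
    Submodule ℂ (Fin N → ℂ) :=
  Submodule.span ℂ {v | ∃ i < n, v = (A ^ i) *ᵥ b}

/-- The Euclidean norm ‖v‖₂ on ℂ^N. -/
noncomputable def eNorm {N : ℕ} (v : Fin N → ℂ) : ℝ :=
  Real.sqrt (∑ i, ‖v i‖ ^ 2)

/-
A minimal annihilating polynomial `p` of `b` has `p(0) ≠ 0` when `A` is injective: otherwise
`p = X q`, and `A (q(A) b) = 0` forces `q(A) b = 0` with `q` monic of smaller degree.
Writing `p = X q + p(0)`, the relation `p(A) b = 0` reads `A (q(A) b) = -p(0) b`, so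
`z = -p(0)⁻¹ q(A) b` solves `A z = b`, and `deg q < deg p` puts `z` in `K_g(A, b)`.
-/

section AnnihilatingPolynomial

variable {n R : Type*} [Fintype n] [DecidableEq n]

theorem aeval_X_mul_mulVec [CommRing R] (A : Matrix n n R) (q : R[X]) (b : n → R) :
    aeval A (X * q) *ᵥ b = A *ᵥ (aeval A q *ᵥ b) := by
  rw [_root_.map_mul, aeval_X, mulVec_mulVec]

theorem aeval_mulVec_eq_mulVec_divX_add [CommRing R] (A : Matrix n n R) (p : R[X]) (b : n → R) :
    aeval A p *ᵥ b = A *ᵥ (aeval A p.divX *ᵥ b) + p.coeff 0 • b := by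
  conv_lhs => rw [← X_mul_divX_add p]
  rw [map_add, add_mulVec, aeval_X_mul_mulVec, aeval_C, algebraMap_eq_diagonal,
    Pi.algebraMap_def, Algebra.algebraMap_self, RingHom.id_apply, ← smul_one_eq_diagonal,
    smul_mulVec, one_mulVec]

theorem coeff_zero_ne_zero_of_minimal_annihilator [CommRing R] [Nontrivial R]
    {A : Matrix n n R} (hA : Function.Injective A.mulVec) {b : n → R} {p : R[X]}
    (hmonic : p.Monic) (hann : aeval A p *ᵥ b = 0)
    (hmin : ∀ q : R[X], q.Monic → aeval A q *ᵥ b = 0 → p.natDegree ≤ q.natDegree) :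
    p.coeff 0 ≠ 0 := by
  intro h0
  have hp : p = X * p.divX := by simpa [h0] using (X_mul_divX_add p).symm
  have hq_monic : p.divX.Monic := monic_X.of_mul_monic_left (hp ▸ hmonic)
  have hq_ann : aeval A p.divX *ᵥ b = 0 := hA <| by
    rw [mulVec_zero, ← aeval_X_mul_mulVec, ← hp, hann]
  have hdeg : p.natDegree = p.divX.natDegree + 1 := by
    conv_lhs => rw [hp]
    exact natDegree_X_mul hq_monic.ne_zero
  have := hmin _ hq_monic hq_ann
  omega

theorem mulVec_neg_inv_coeff_zero_smul [Field R] {A : Matrix n n R} {b : n → R} {p : R[X]}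
    (hann : aeval A p *ᵥ b = 0) (h0 : p.coeff 0 ≠ 0) :
    A *ᵥ (-(p.coeff 0)⁻¹ • (aeval A p.divX *ᵥ b)) = b := by
  rw [aeval_mulVec_eq_mulVec_divX_add, add_eq_zero_iff_eq_neg] at hann
  rw [mulVec_smul, hann, smul_neg, neg_smul, neg_neg, smul_smul, inv_mul_cancel₀ h0, one_smul]

end AnnihilatingPolynomial

theorem aeval_mulVec_mem_krylov {N : ℕ} (A : Matrix (Fin N) (Fin N) ℂ) (b : Fin N → ℂ)
    {q : ℂ[X]} {n : ℕ} (hq : q.degree < n) :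
    aeval A q *ᵥ b ∈ krylov A b n := by
  rw [aeval_def, eval₂_eq_sum, Polynomial.sum_def, sum_mulVec]
  refine Submodule.sum_mem _ fun i hi => ?_
  rw [← Algebra.smul_def, smul_mulVec]
  refine Submodule.smul_mem _ _ (Submodule.subset_span ⟨i, ?_, rfl⟩)
  exact_mod_cast (le_degree_of_mem_supp i hi).trans_lt hq

theorem isLeast_eNorm_residual_of_exists {N : ℕ} {A : Matrix (Fin N) (Fin N) ℂ} {b : Fin N → ℂ}
    {K : Submodule ℂ (Fin N → ℂ)} (h : ∃ z ∈ K, A *ᵥ z = b) :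
    IsLeast {r : ℝ | ∃ z ∈ K, r = eNorm (b - A *ᵥ z)} 0 := by
  obtain ⟨z, hz, hAz⟩ := h
  refine ⟨⟨z, hz, by simp [hAz, eNorm]⟩, ?_⟩
  rintro r ⟨_, _, rfl⟩
  exact Real.sqrt_nonneg _

/-- For an invertible matrix A and g the degree of the minimal
polynomial of b with respect to A, there exists z ∈ K_g(A, b) with Az = b, and the
minimum over z ∈ K_g(A, b) of ‖b − Az‖₂ equals 0; hence GMRES, which minimizes
‖b − Az‖₂ over z ∈ K_n(A, b) at iteration n, produces the exact solution in at
most g iterations. -/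
theorem gmres_exact_in_g_iterations
    {N : ℕ} (A : Matrix (Fin N) (Fin N) ℂ) (hA : IsUnit A.det) (b : Fin N → ℂ)
    (p : Polynomial ℂ) (hmonic : p.Monic)
    (hann : (Polynomial.aeval A p) *ᵥ b = 0)
    (hmin : ∀ q : Polynomial ℂ, q.Monic → (Polynomial.aeval A q) *ᵥ b = 0 →
      p.natDegree ≤ q.natDegree)
    (g : ℕ) (hg : g = p.natDegree) :
    (∃ z ∈ krylov A b g, A *ᵥ z = b) ∧
    IsLeast {r : ℝ | ∃ z ∈ krylov A b g, r = eNorm (b - A *ᵥ z)} 0 := by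
  have hinj : Function.Injective A.mulVec :=
    mulVec_injective_iff_isUnit.mpr ((isUnit_iff_isUnit_det A).mpr hA)
  have h0 := coeff_zero_ne_zero_of_minimal_annihilator hinj hmonic hann hmin
  have hdeg : p.divX.degree < g := by
    rw [hg, ← degree_eq_natDegree hmonic.ne_zero]
    exact degree_divX_lt hmonic.ne_zero
  have hsol : ∃ z ∈ krylov A b g, A *ᵥ z = b :=
    ⟨_, Submodule.smul_mem _ _ (aeval_mulVec_mem_krylov A b hdeg),
      mulVec_neg_inv_coeff_zero_smul hann h0⟩
  exact ⟨hsol, isLeast_eNorm_residual_of_exists hsol⟩
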